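/- Let C ⊆ (ℤ/4ℤ)^8 be the ℤ/4ℤ-linear code generated by the rows of the 4×8 matrix whose columns are (1,0,0,0), (0,1,0,0), (0,0,1,0), (0,0,0,1), (1,3,3,2), (2,1,3,3), (1,2,1,3), (1,1,2,1). Then C has exactly 256 codewords, and its image under the coordinatewise Gray map is a binary code of length 16 with 256 codewords, minimum Hamming distance 6, and Hamming weight distribution 1 + 112·X^6 + 30·X^8 + 112·X^10 + X^16 (this is the Nordstrom–Robinson code). -/

import Mathlib

/-!
The Gray map is an isometry from `(ℤ/4ℤ)ⁿ` with the Lee metric to `𝔽₂^(2n)` with the Hamming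
metric, so Hamming distances and weights in `B16` are Lee distances and weights in `C8`, and by
linearity of `C8` distances are weights of differences. The generator matrix is systematic (its
first four columns form the identity), so the encoding `c ↦ ∑ᵢ cᵢ G8ᵢ` is a bijection
`(ℤ/4ℤ)⁴ ≃ C8`; the Lee weight distribution is then read off the 256 codewords, and the minimum
distance follows from it.
-/

/-- The Gray map ℤ/4ℤ → 𝔽₂²: 0 ↦ 00, 1 ↦ 01, 2 ↦ 11, 3 ↦ 10. -/
def gray (a : ZMod 4) : Fin 2 → ZMod 2 :=
  if a = 0 then ![0, 0] else if a = 1 then ![0, 1] else if a = 2 then ![1, 1] else ![1, 0]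

/-- The coordinatewise Gray map (ℤ/4ℤ)ⁿ → 𝔽₂^(2n). -/
def grayWord {n : ℕ} (v : Fin n → ZMod 4) : Fin n × Fin 2 → ZMod 2 :=
  fun p => gray (v p.1) p.2

/-- The generator matrix whose columns are (1,0,0,0), (0,1,0,0), (0,0,1,0),
(0,0,0,1), (1,3,3,2), (2,1,3,3), (1,2,1,3), (1,1,2,1). -/
def G8 : Fin 4 → Fin 8 → ZMod 4 :=
  ![![1,0,0,0,1,2,1,1], ![0,1,0,0,3,1,2,1], ![0,0,1,0,3,3,1,2], ![0,0,0,1,2,3,3,1]]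

/-- The ℤ/4ℤ-linear code generated by the rows of `G8`. -/
def C8 : Submodule (ZMod 4) (Fin 8 → ZMod 4) := Submodule.span (ZMod 4) (Set.range G8)

/-- The binary Gray image of `C8`, of length 16 (the Nordstrom–Robinson code). -/
def B16 : Set (Fin 8 × Fin 2 → ZMod 2) := grayWord '' (C8 : Set (Fin 8 → ZMod 4))

/-- The Lee weight on `ℤ/4ℤ`: the distance from `a` to `0` on the cycle `0 - 1 - 2 - 3 - 0`. -/
def leeWeight (a : ZMod 4) : ℕ := min a.val (4 - a.val)

def leeNorm {n : ℕ} (v : Fin n → ZMod 4) : ℕ := ∑ j, leeWeight (v j)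

section LeeWeight

variable {n : ℕ}

lemma leeWeight_eq_zero_iff {a : ZMod 4} : leeWeight a = 0 ↔ a = 0 := by
  revert a; decide

lemma leeWeight_le_two (a : ZMod 4) : leeWeight a ≤ 2 := by
  revert a; decide

lemma leeNorm_eq_zero_iff {v : Fin n → ZMod 4} : leeNorm v = 0 ↔ v = 0 := by
  simp [leeNorm, Finset.sum_eq_zero_iff, leeWeight_eq_zero_iff, funext_iff]

lemma leeNorm_le (v : Fin n → ZMod 4) : leeNorm v ≤ 2 * n :=
  calc leeNorm v ≤ ∑ _j : Fin n, 2 := Finset.sum_le_sum fun j _ => leeWeight_le_two (v j)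
    _ = 2 * n := by simp [mul_comm]

end LeeWeight

lemma hammingDist_eq_sum_hammingDist_curry {ι κ β : Type*} [Fintype ι] [Fintype κ]
    [DecidableEq β] (x y : ι × κ → β) :
    hammingDist x y = ∑ i, hammingDist (fun k => x (i, k)) (fun k => y (i, k)) := by
  simp only [hammingDist, Finset.card_filter, Fintype.sum_prod_type]

section Gray

variable {n : ℕ}

lemma gray_injective : Function.Injective gray := by
  decide

lemma grayWord_injective : Function.Injective (grayWord (n := n)) :=
  fun _ _ h => funext fun j => gray_injective (funext fun k => congrFun h (j, k))

lemma hammingDist_gray (a b : ZMod 4) : hammingDist (gray a) (gray b) = leeWeight (a - b) := by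
  revert a b; decide

lemma hammingDist_grayWord (u v : Fin n → ZMod 4) :
    hammingDist (grayWord u) (grayWord v) = leeNorm (u - v) := by
  simp only [hammingDist_eq_sum_hammingDist_curry, grayWord, hammingDist_gray, leeNorm,
    Pi.sub_apply]

lemma grayWord_zero : grayWord (0 : Fin n → ZMod 4) = 0 := by
  funext ⟨_, k⟩
  fin_cases k <;> rfl

lemma hammingNorm_grayWord (v : Fin n → ZMod 4) : hammingNorm (grayWord v) = leeNorm v := by
  rw [← hammingDist_zero_right, ← grayWord_zero, hammingDist_grayWord, sub_zero]

end Gray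

def encode : (Fin 4 → ZMod 4) →ₗ[ZMod 4] (Fin 8 → ZMod 4) :=
  Fintype.linearCombination (ZMod 4) G8

lemma range_encode : LinearMap.range encode = C8 :=
  Fintype.range_linearCombination (ZMod 4) G8

lemma encode_apply_castAdd (c : Fin 4 → ZMod 4) (i : Fin 4) :
    encode c (Fin.castAdd 4 i) = c i := by
  fin_cases i <;> simp [encode, Fintype.linearCombination_apply, Fin.sum_univ_four, G8]

lemma encode_injective : Function.Injective encode :=
  fun c d h => funext fun i => by
    rw [← encode_apply_castAdd c, ← encode_apply_castAdd d, h]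

lemma B16_eq_range : B16 = Set.range (grayWord ∘ encode) := by
  rw [B16, ← range_encode, LinearMap.coe_range, Set.range_comp]

lemma nat_card_C8 : Nat.card C8 = 256 := by
  have hC8 : (C8 : Set (Fin 8 → ZMod 4)) = Set.range encode := by
    rw [← range_encode, LinearMap.coe_range]
  rw [← SetLike.coe_sort_coe, hC8, Nat.card_range_of_injective encode_injective]
  simp

lemma ncard_B16 : B16.ncard = 256 := by
  rw [B16_eq_range, ← Set.image_univ,
    Set.ncard_image_of_injective _ (grayWord_injective.comp encode_injective)]
  simp

def nrWeightCount (w : ℕ) : ℕ :=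
  if w = 0 then 1 else if w = 6 then 112 else if w = 8 then 30 else
    if w = 10 then 112 else if w = 16 then 1 else 0

lemma card_filter_leeNorm_encode_of_lt :
    ∀ w < 17, (Finset.univ.filter fun c => leeNorm (encode c) = w).card = nrWeightCount w := by
  decide

lemma card_filter_leeNorm_encode (w : ℕ) :
    (Finset.univ.filter fun c => leeNorm (encode c) = w).card = nrWeightCount w := by
  obtain hw | hw := lt_or_ge w 17
  · exact card_filter_leeNorm_encode_of_lt w hw
  · have hzero : nrWeightCount w = 0 := by
      simp only [nrWeightCount]
      split_ifs <;> omega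
    rw [hzero, Finset.card_eq_zero, Finset.filter_eq_empty_iff]
    intro c _ hc
    have := leeNorm_le (encode c)
    omega

lemma exists_leeNorm_encode_eq_six : ∃ c, leeNorm (encode c) = 6 := by
  obtain ⟨c, hc⟩ : (Finset.univ.filter fun c => leeNorm (encode c) = 6).Nonempty := by
    rw [← Finset.card_pos, card_filter_leeNorm_encode]
    decide
  exact ⟨c, (Finset.mem_filter.1 hc).2⟩

lemma six_le_leeNorm_encode {c : Fin 4 → ZMod 4} (hc : c ≠ 0) : 6 ≤ leeNorm (encode c) := by
  have hpos : leeNorm (encode c) ≠ 0 := by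
    rw [Ne, leeNorm_eq_zero_iff, ← map_zero encode]
    exact encode_injective.ne hc
  have hcount : nrWeightCount (leeNorm (encode c)) ≠ 0 := by
    rw [← card_filter_leeNorm_encode]
    exact Finset.card_ne_zero_of_mem (Finset.mem_filter.2 ⟨Finset.mem_univ c, rfl⟩)
  generalize leeNorm (encode c) = w at hpos hcount
  by_contra! hlt
  interval_cases w <;> simp [nrWeightCount] at hpos hcount

lemma hammingDist_grayWord_encode (c d : Fin 4 → ZMod 4) :
    hammingDist ((grayWord ∘ encode) c) ((grayWord ∘ encode) d) = leeNorm (encode (c - d)) := by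
  rw [Function.comp_apply, Function.comp_apply, hammingDist_grayWord, map_sub]

lemma ncard_filter_B16_hammingNorm (w : ℕ) :
    {x ∈ B16 | hammingNorm x = w}.ncard =
      (Finset.univ.filter fun c => leeNorm (encode c) = w).card := by
  have : {x ∈ B16 | hammingNorm x = w} = grayWord ∘ encode '' {c | leeNorm (encode c) = w} := by
    ext x
    rw [B16_eq_range]
    constructor
    · rintro ⟨⟨c, rfl⟩, hw⟩
      exact ⟨c, by rwa [Function.comp_apply, hammingNorm_grayWord] at hw, rfl⟩
    · rintro ⟨c, hw, rfl⟩
      exact ⟨⟨c, rfl⟩, by rwa [Function.comp_apply, hammingNorm_grayWord]⟩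
  rw [this, Set.ncard_image_of_injective _ (grayWord_injective.comp encode_injective),
    Set.ncard_eq_toFinset_card']
  simp

/-- `C8` has 256 codewords and its Gray image is a binary code of length 16 with
256 codewords, minimum Hamming distance 6 and weight enumerator
1 + 112·X⁶ + 30·X⁸ + 112·X¹⁰ + X¹⁶ (the Nordstrom–Robinson code). -/
theorem nordstrom_robinson :
    Nat.card C8 = 256 ∧ B16.ncard = 256 ∧
    (∀ x ∈ B16, ∀ y ∈ B16, x ≠ y → 6 ≤ hammingDist x y) ∧
    (∃ x ∈ B16, ∃ y ∈ B16, hammingDist x y = 6) ∧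
    (∀ w : ℕ, {x ∈ B16 | hammingNorm x = w}.ncard =
      if w = 0 then 1 else if w = 6 then 112 else if w = 8 then 30 else
        if w = 10 then 112 else if w = 16 then 1 else 0) := by
  refine ⟨nat_card_C8, ncard_B16, ?_, ?_, fun w => ?_⟩
  · rw [B16_eq_range]
    rintro _ ⟨c, rfl⟩ _ ⟨d, rfl⟩ hne
    rw [hammingDist_grayWord_encode]
    exact six_le_leeNorm_encode (sub_ne_zero.2 fun h => hne (by rw [h]))
  · obtain ⟨c, hc⟩ := exists_leeNorm_encode_eq_six
    rw [B16_eq_range]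
    exact ⟨_, ⟨c, rfl⟩, _, ⟨0, rfl⟩, by rw [hammingDist_grayWord_encode, sub_zero, hc]⟩
  · rw [ncard_filter_B16_hammingNorm, card_filter_leeNorm_encode, nrWeightCount]
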